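/- Let p be a prime. Then κ(p²) = κ(p) if and only if p² divides F_{κ(p)}. -/
import Mathlib

private lemma pisano_shift (m : ℕ) :
    ∀ i d : ℕ, ((Nat.fib (i+d) : ZMod m) = Nat.fib i ∧ (Nat.fib (i+d+1) : ZMod m) = Nat.fib (i+1)) →
      ((Nat.fib d : ZMod m) = Nat.fib 0 ∧ (Nat.fib (d+1) : ZMod m) = Nat.fib 1) := by
  intro i
  induction i with
  | zero => simpa using fun d h => h
  | succ n ih =>
    intro d h
    apply ih
    obtain ⟨h1, h2⟩ := h
    constructor
    · have e1 : Nat.fib (n + d + 2) = Nat.fib (n+d) + Nat.fib (n+d+1) := Nat.fib_add_two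
      have e2 : Nat.fib (n + 2) = Nat.fib n + Nat.fib (n+1) := Nat.fib_add_two
      have h1' : (Nat.fib (n+d+1) : ZMod m) = Nat.fib (n+1) := by
        convert h1 using 2 <;> ring
      have h2' : (Nat.fib (n+d+2) : ZMod m) = Nat.fib (n+2) := by
        convert h2 using 2 <;> ring
      have : (Nat.fib (n+d) : ZMod m) = (Nat.fib (n+d+2) : ZMod m) - Nat.fib (n+d+1) := by
        rw [e1]; push_cast; ring
      rw [this, h1', h2', e2]; push_cast; ring
    · convert h1 using 2 <;> ring

private lemma pisano_exists (m : ℕ) (hm : 2 ≤ m) :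
    ∃ l, 0 < l ∧ Nat.fib l % m = 0 ∧ Nat.fib (l + 1) % m = 1 := by
  haveI : NeZero m := ⟨by omega⟩
  obtain ⟨a, b, hab, hfab⟩ := Finite.exists_ne_map_eq_of_infinite
    (fun n : ℕ => ((Nat.fib n : ZMod m), (Nat.fib (n+1) : ZMod m)))
  wlog hlt : a < b generalizing a b
  · exact this b a hab.symm hfab.symm (by omega)
  have h := pisano_shift m a (b - a) (by
    have : a + (b - a) = b := by omega
    rw [this]
    exact ⟨(congrArg Prod.fst hfab).symm, (congrArg Prod.snd hfab).symm⟩)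
  refine ⟨b - a, by omega, ?_, ?_⟩
  · have : (Nat.fib (b-a) : ZMod m) = 0 := by simpa using h.1
    exact Nat.mod_eq_zero_of_dvd ((ZMod.natCast_eq_zero_iff _ _).mp this)
  · have : (Nat.fib (b-a+1) : ZMod m) = ((1:ℕ) : ZMod m) := by simpa using h.2
    have := (ZMod.natCast_eq_natCast_iff _ _ _).mp this
    simpa [Nat.ModEq, Nat.one_mod_eq_one.mpr (by omega : m ≠ 1)] using this

private lemma cassini (n : ℕ) :
    (Nat.fib (n+1) : ℤ)^2 - Nat.fib (n+2) * Nat.fib n = (-1)^n := by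
  induction n with
  | zero => simp
  | succ k ih =>
    have e1 : (Nat.fib (k+3) : ℤ) = Nat.fib (k+1) + Nat.fib (k+2) := by
      have := Nat.fib_add_two (n := k+1); push_cast [this]; ring
    have e2 : (Nat.fib (k+2) : ℤ) = Nat.fib k + Nat.fib (k+1) := by
      have := Nat.fib_add_two (n := k); push_cast [this]; ring
    have : (Nat.fib (k+2) : ℤ)^2 - Nat.fib (k+3) * Nat.fib (k+1) = -((Nat.fib (k+1):ℤ)^2 - Nat.fib (k+2) * Nat.fib k) := by
      rw [e1]; nlinarith [e2]
    rw [show k+1+1 = k+2 from rfl, show k+1+2 = k+3 from rfl, this, ih]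
    ring

noncomputable def kappa (m : ℕ) : ℕ :=
  sInf {l : ℕ | 0 < l ∧ Nat.fib l % m = 0 ∧ Nat.fib (l + 1) % m = 1}

private lemma kappa_mem (m : ℕ) (hm : 2 ≤ m) :
    0 < kappa m ∧ Nat.fib (kappa m) % m = 0 ∧ Nat.fib (kappa m + 1) % m = 1 :=
  Nat.sInf_mem (pisano_exists m hm)

theorem kappa_sq_eq_iff (p : ℕ) (hp : p.Prime) :
    kappa (p ^ 2) = kappa p ↔ p ^ 2 ∣ Nat.fib (kappa p) := by
  have hp2 : 2 ≤ p := hp.two_le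
  have hsq2 : 2 ≤ p ^ 2 := by nlinarith
  obtain ⟨hpos2, hz2, ho2⟩ := kappa_mem (p ^ 2) hsq2
  obtain ⟨hpos, hz, ho⟩ := kappa_mem p hp2
  have hpdvd : p ∣ p ^ 2 := dvd_pow_self p (by norm_num)
  -- κ(p) ≤ κ(p²)
  have hle : kappa p ≤ kappa (p ^ 2) := by
    apply Nat.sInf_le
    refine ⟨hpos2, Nat.mod_eq_zero_of_dvd (hpdvd.trans (Nat.dvd_of_mod_eq_zero hz2)), ?_⟩
    have h1 : Nat.fib (kappa (p ^ 2) + 1) ≡ 1 [MOD p ^ 2] := by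
      unfold Nat.ModEq
      rw [ho2, Nat.one_mod_eq_one.mpr (by omega)]
    have h2 := h1.of_dvd hpdvd
    unfold Nat.ModEq at h2
    rwa [Nat.one_mod_eq_one.mpr (by omega : p ≠ 1)] at h2
  constructor
  · intro h
    rw [← h]
    exact Nat.dvd_of_mod_eq_zero hz2
  · intro h
    by_cases hp2' : p = 2
    · -- p = 2 : show kappa 2 = 3 and derive contradiction from 4 ∣ fib 3
      exfalso
      subst hp2'
      have hk3 : kappa 2 ≤ 3 := Nat.sInf_le (by norm_num [Nat.fib])
      interval_cases hk : kappa 2 <;> simp_all [Nat.fib] <;> omega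
    · -- p odd
      have hp3 : 3 ≤ p := by
        rcases hp.eq_two_or_odd' with h2 | hodd
        · exact absurd h2 hp2'
        · obtain ⟨t, rfl⟩ := hodd; omega
      set k := kappa p with hk
      have hpI : Prime ((p : ℤ)) := (by rw [Int.prime_iff_natAbs_prime]; simpa)
      have hcas := cassini k
      have hzI : ((p : ℤ)) ∣ (Nat.fib k : ℤ) :=
        Int.natCast_dvd_natCast.mpr (Nat.dvd_of_mod_eq_zero hz)
      have hzI2 : ((p : ℤ) ^ 2) ∣ (Nat.fib k : ℤ) := by
        exact_mod_cast Int.natCast_dvd_natCast.mpr h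
      have hoM : Nat.fib (k + 1) ≡ 1 [MOD p] := by
        unfold Nat.ModEq; rw [ho, Nat.one_mod_eq_one.mpr (by omega)]
      have hoI : ((p : ℤ)) ∣ (Nat.fib (k + 1) : ℤ) - 1 := hoM.symm.dvd
      -- k is even
      have hkeven : (-1 : ℤ) ^ k = 1 := by
        rcases Nat.even_or_odd k with he | hodd
        · exact he.neg_one_pow
        · exfalso
          have h2 : ((p : ℤ)) ∣ 2 := by
            have : (1 : ℤ) - (-1) ^ k =
                (1 - (Nat.fib (k+1) : ℤ)) * (1 + (Nat.fib (k+1) : ℤ))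
                + (Nat.fib (k+2) : ℤ) * Nat.fib k
                + ((Nat.fib (k+1) : ℤ)^2 - Nat.fib (k+2) * Nat.fib k - (-1)^k) := by ring
            have hd : ((p : ℤ)) ∣ (1 : ℤ) - (-1) ^ k := by
              rw [this, hcas]
              simp only [sub_self, add_zero]
              exact dvd_add ((dvd_sub_comm.mp hoI).mul_right _) (hzI.mul_left _)
            rw [hodd.neg_one_pow] at hd
            have e : (1 : ℤ) - (-1) = 2 := by norm_num
            rwa [e] at hd
          have := Int.le_of_dvd (by norm_num) h2
          omega
      -- fib (k+1) ≡ 1 mod p²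
      have hsq : ((p : ℤ) ^ 2) ∣ (Nat.fib (k + 1) : ℤ) - 1 := by
        have hprod : ((p : ℤ) ^ 2) ∣ ((Nat.fib (k+1) : ℤ) - 1) * ((Nat.fib (k+1) : ℤ) + 1) := by
          have : ((Nat.fib (k+1) : ℤ) - 1) * ((Nat.fib (k+1) : ℤ) + 1) =
              (Nat.fib (k+2) : ℤ) * Nat.fib k
              + ((Nat.fib (k+1) : ℤ)^2 - Nat.fib (k+2) * Nat.fib k - (-1)^k)
              + ((-1)^k - 1) := by ring
          rw [this, hcas, hkeven]
          simpa using hzI2.mul_left (Nat.fib (k+2) : ℤ)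
        have hnd : ¬ ((p : ℤ)) ∣ (Nat.fib (k + 1) : ℤ) + 1 := by
          intro hd
          have h2 : ((p : ℤ)) ∣ 2 := by
            have : (2 : ℤ) = ((Nat.fib (k+1) : ℤ) + 1) - ((Nat.fib (k+1) : ℤ) - 1) := by ring
            rw [this]; exact dvd_sub hd hoI
          have := Int.le_of_dvd (by norm_num) h2
          omega
        -- p² ∣ a * b, p ∤ b ⇒ p² ∣ a
        have hpa : ((p : ℤ)) ∣ (Nat.fib (k + 1) : ℤ) - 1 := hoI
        obtain ⟨a', ha'⟩ := hpa
        rw [ha'] at hprod ⊢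
        have : ((p : ℤ)) ∣ a' * ((Nat.fib (k+1) : ℤ) + 1) := by
          rcases hprod with ⟨c, hc⟩
          refine ⟨c, ?_⟩
          have hp0 : ((p : ℤ)) ≠ 0 := by positivity
          have e : (p:ℤ) * (a' * ((Nat.fib (k+1) : ℤ) + 1)) = (p:ℤ) * ((p:ℤ) * c) := by
            linear_combination hc
          exact mul_left_cancel₀ hp0 e
        rcases (hpI.dvd_mul.mp this) with ha | hb
        · obtain ⟨a'', rfl⟩ := ha
          exact ⟨a'', by ring⟩
        · exact absurd hb hnd
      have hoM2 : Nat.fib (k + 1) % p ^ 2 = 1 := by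
        have hNat : p ^ 2 ∣ Nat.fib (k + 1) - 1 := by
          have h1le : 1 ≤ Nat.fib (k + 1) := Nat.fib_pos.mpr (by omega)
          have : ((Nat.fib (k + 1) - 1 : ℕ) : ℤ) = (Nat.fib (k + 1) : ℤ) - 1 := by
            push_cast [h1le]; ring
          exact_mod_cast (by rw [this]; exact_mod_cast hsq : ((p ^ 2 : ℕ) : ℤ) ∣ ((Nat.fib (k + 1) - 1 : ℕ) : ℤ))
        have h1le : 1 ≤ Nat.fib (k + 1) := Nat.fib_pos.mpr (by omega)
        have := (Nat.modEq_iff_dvd' h1le).mpr hNat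
        unfold Nat.ModEq at this
        rw [Nat.one_mod_eq_one.mpr (by omega)] at this
        omega
      have hge : kappa (p ^ 2) ≤ k :=
        Nat.sInf_le ⟨hpos, Nat.mod_eq_zero_of_dvd h, hoM2⟩
      omega
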